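/- arXiv:1804.10717 — 6 statements merged into one kernel-verified Lean document; each statement's English description precedes it below -/
import Mathlib

section
/- Let F be a hypergraph on n vertices and let 0 < i < n be an integer. If every induced sub-hypergraph of F on i vertices has at most |F|/2 edges, then F has at least i vertices of degree at least |F|/(2n). -/
/-!
Suppose fewer than `i` vertices have degree at least `|F|/(2n)`, and enlarge the set of those
vertices to an `i`-set `I`. Every edge not induced by `I` meets `V \ I`, where all degrees are
below `|F|/(2n)`; so fewer than `n · |F|/(2n) = |F|/2` edges leave `I`, while at most `|F|/2` are
induced by it, which together account for fewer than `|F|` edges.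
-/

open Finset

namespace Finset

theorem card_le_card_filter_subset_add_sum_card_filter_mem {α : Type*} [DecidableEq α]
    {V I : Finset α} {E : Finset (Finset α)} (hE : ∀ e ∈ E, e ⊆ V) :
    #E ≤ #(E.filter (· ⊆ I)) + ∑ v ∈ V \ I, #(E.filter (v ∈ ·)) := by
  rw [← card_filter_add_card_filter_not (· ⊆ I)]
  gcongr
  calc #(E.filter (¬ · ⊆ I))
      ≤ #((V \ I).biUnion fun v => E.filter (v ∈ ·)) := by
        refine card_le_card fun e he => ?_
        obtain ⟨heE, heI⟩ := mem_filter.mp he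
        obtain ⟨v, hve, hvI⟩ := not_subset.mp heI
        exact mem_biUnion.mpr
          ⟨v, mem_sdiff.mpr ⟨hE e heE hve, hvI⟩, mem_filter.mpr ⟨heE, hve⟩⟩
    _ ≤ ∑ v ∈ V \ I, #(E.filter (v ∈ ·)) := card_biUnion_le

theorem sum_lt_of_forall_lt_div_card {ι : Type*} {s t : Finset ι} (hst : s ⊆ t)
    (hs : s.Nonempty) {f : ι → ℝ} {a : ℝ} (ha : 0 ≤ a) (hf : ∀ x ∈ s, f x < a / #t) :
    ∑ x ∈ s, f x < a := by
  have ht : (0 : ℝ) < #t := by exact_mod_cast (hs.mono hst).card_pos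
  calc ∑ x ∈ s, f x < ∑ _x ∈ s, a / #t := sum_lt_sum_of_nonempty hs hf
    _ = #s * (a / #t) := by rw [sum_const, nsmul_eq_mul]
    _ ≤ #t * (a / #t) := by gcongr
    _ = a := mul_div_cancel₀ a ht.ne'

end Finset

theorem stmt_1_general {α : Type*} [DecidableEq α] (V : Finset α) (E : Finset (Finset α))
    (hE : ∀ e ∈ E, e ⊆ V) (i : ℕ) (hin : i < V.card)
    (hsparse : ∀ I ⊆ V, I.card = i →
      ((E.filter (fun e => e ⊆ I)).card : ℝ) ≤ (E.card : ℝ) / 2) :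
    i ≤ (V.filter (fun v =>
      (E.card : ℝ) / (2 * (V.card : ℝ)) ≤ ((E.filter (fun e => v ∈ e)).card : ℝ))).card := by
  by_contra! hfew
  obtain ⟨I, hhighI, hIV, hIcard⟩ :=
    exists_subsuperset_card_eq (filter_subset _ V) hfew.le hin.le
  have hlow : ∀ v ∈ V \ I,
      ((E.filter (v ∈ ·)).card : ℝ) < (E.card : ℝ) / 2 / V.card := by
    intro v hv
    obtain ⟨hvV, hvI⟩ := mem_sdiff.mp hv
    rw [div_div]
    by_contra! hhigh
    exact hvI (hhighI (mem_filter.mpr ⟨hvV, hhigh⟩))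
  have hout : ∑ v ∈ V \ I, ((E.filter (v ∈ ·)).card : ℝ) < (E.card : ℝ) / 2 := by
    refine sum_lt_of_forall_lt_div_card sdiff_subset ?_ (by positivity) hlow
    rw [← card_pos, card_sdiff_of_subset hIV, hIcard]
    omega
  have hcover : (E.card : ℝ) ≤
      (E.filter (· ⊆ I)).card + ∑ v ∈ V \ I, ((E.filter (v ∈ ·)).card : ℝ) := by
    exact_mod_cast card_le_card_filter_subset_add_sum_card_filter_mem hE
  linarith [hsparse I hIV hIcard]

/-- If every induced sub-hypergraph of `F` on `i` vertices has at most `|F|/2`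
edges, then `F` has at least `i` vertices of degree at least `|F|/(2n)`. -/
theorem stmt_1 {α : Type*} [DecidableEq α] (V : Finset α) (E : Finset (Finset α))
    (hE : ∀ e ∈ E, e ⊆ V) (i : ℕ) (hi0 : 0 < i) (hin : i < V.card)
    (hsparse : ∀ I ⊆ V, I.card = i →
      ((E.filter (fun e => e ⊆ I)).card : ℝ) ≤ (E.card : ℝ) / 2) :
    i ≤ (V.filter (fun v =>
      (E.card : ℝ) / (2 * (V.card : ℝ)) ≤ ((E.filter (fun e => v ∈ e)).card : ℝ))).card :=
  stmt_1_general V E hE i hin hsparse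
end

section
/- For every positive integer k and reals 0 ≤ γ ≤ 1 and x ≥ k, one has ∑_{i=0}^{k} C(x, i) γ^i ≥ (1/4) (∑_{i=0}^{k} C(x, i))^{log₂(1+γ)}. -/
/-- The generalized binomial coefficient `C(x, i) = x(x-1)⋯(x-i+1)/i!`. -/
noncomputable def rchoose (x : ℝ) (i : ℕ) : ℝ :=
  (∏ j ∈ Finset.range i, (x - j)) / (Nat.factorial i : ℝ)

/-!
Let `P(g) = ∑_{i ≤ k} C(x, i) g^i`. Comparing coefficients with `C(x, i+1)(i+1) = C(x, i)(x-i)`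
gives `(1 + g) P'(g) = x P(g) - (x - k) C(x, k) g^k`, so with `g = e^t - 1` the function
`t ↦ log P(e^t - 1)` has derivative `x - (x - k) C(x, k) g^k / P(g)`. Since `P` has degree `k`
and nonnegative coefficients, `g^k / P(g)` is nondecreasing on `[0, ∞)`, so this derivative is
nonincreasing and `log P(e^t - 1)` is concave for `t ≥ 0`. Comparing `t = log (1 + γ)` with the
chord from `t = 0` (where `P = 1`) to `t = log 2` gives `P(γ) ≥ P(1)^{log₂(1+γ)}`.
-/

open Finset Polynomial Real

lemma pow_mul_sum_le_pow_mul_sum (k : ℕ) {a : ℕ → ℝ} (ha : ∀ i ∈ range (k + 1), 0 ≤ a i)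
    {g h : ℝ} (hg : 0 ≤ g) (hgh : g ≤ h) :
    g ^ k * ∑ i ∈ range (k + 1), a i * h ^ i ≤ h ^ k * ∑ i ∈ range (k + 1), a i * g ^ i := by
  rw [mul_sum, mul_sum]
  refine sum_le_sum fun i hi => ?_
  have hik : i ≤ k := Nat.lt_succ_iff.1 (mem_range.1 hi)
  have hpow : g ^ (k - i) ≤ h ^ (k - i) := pow_le_pow_left₀ hg hgh _
  have := ha i hi
  have := hg.trans hgh
  calc g ^ k * (a i * h ^ i) = a i * g ^ i * h ^ i * g ^ (k - i) := by
        rw [← pow_mul_pow_sub g hik]; ring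
    _ ≤ a i * g ^ i * h ^ i * h ^ (k - i) := by gcongr
    _ = h ^ k * (a i * g ^ i) := by rw [← pow_mul_pow_sub h hik]; ring

lemma rchoose_zero (x : ℝ) : rchoose x 0 = 1 := by simp [rchoose]

lemma succ_mul_rchoose_succ (x : ℝ) (i : ℕ) :
    ((i : ℝ) + 1) * rchoose x (i + 1) = (x - i) * rchoose x i := by
  have hi : (i.factorial : ℝ) ≠ 0 := by positivity
  simp only [rchoose, prod_range_succ, Nat.factorial_succ, Nat.cast_mul, Nat.cast_succ]
  field_simp

lemma rchoose_nonneg {x : ℝ} {i : ℕ} (h : (i : ℝ) ≤ x + 1) : 0 ≤ rchoose x i := by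
  refine div_nonneg (prod_nonneg fun j hj => ?_) (by positivity)
  have : (j : ℝ) + 1 ≤ i := by exact_mod_cast mem_range.1 hj
  linarith

lemma rchoose_nonneg_of_mem_range {x : ℝ} {k i : ℕ} (hx : (k : ℝ) ≤ x)
    (hi : i ∈ range (k + 1)) : 0 ≤ rchoose x i := by
  have : (i : ℝ) ≤ k := by exact_mod_cast Nat.lt_succ_iff.1 (mem_range.1 hi)
  exact rchoose_nonneg (by linarith)

noncomputable def truncBinomial (x : ℝ) (k : ℕ) : ℝ[X] :=
  ∑ i ∈ range (k + 1), C (rchoose x i) * X ^ i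

section Identities

variable (x : ℝ) (k : ℕ)

lemma eval_truncBinomial (g : ℝ) :
    (truncBinomial x k).eval g = ∑ i ∈ range (k + 1), rchoose x i * g ^ i := by
  simp [truncBinomial, eval_finsetSum]

lemma eval_truncBinomial_zero : (truncBinomial x k).eval 0 = 1 := by
  simp [eval_truncBinomial, sum_range_succ', rchoose_zero]

lemma eval_derivative_truncBinomial (g : ℝ) :
    (derivative (truncBinomial x k)).eval g
      = ∑ i ∈ range k, ((i : ℝ) + 1) * rchoose x (i + 1) * g ^ i := by
  simp only [truncBinomial, derivative_sum, derivative_C_mul_X_pow, eval_finsetSum, eval_mul,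
    eval_C, eval_pow, eval_X]
  rw [sum_range_succ']
  simp only [Nat.cast_add, Nat.cast_one, add_tsub_cancel_right, CharP.cast_eq_zero, mul_zero,
    zero_tsub, pow_zero, mul_one, add_zero]
  exact sum_congr rfl fun i _ => by ring

lemma one_add_mul_eval_derivative_truncBinomial (g : ℝ) :
    (1 + g) * (derivative (truncBinomial x k)).eval g
      = x * (truncBinomial x k).eval g - (x - k) * rchoose x k * g ^ k := by
  have hD : (derivative (truncBinomial x k)).eval g
      = ∑ i ∈ range k, (x - i) * rchoose x i * g ^ i := by
    rw [eval_derivative_truncBinomial]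
    exact sum_congr rfl fun i _ => by rw [succ_mul_rchoose_succ]
  have hXD : g * (derivative (truncBinomial x k)).eval g
      = ∑ i ∈ range (k + 1), (i : ℝ) * rchoose x i * g ^ i := by
    rw [eval_derivative_truncBinomial, mul_sum, sum_range_succ']
    simp only [Nat.cast_zero, zero_mul, add_zero, Nat.cast_add, Nat.cast_one]
    exact sum_congr rfl fun i _ => by ring
  have hxP : x * (truncBinomial x k).eval g
      = ∑ i ∈ range (k + 1), (x - i) * rchoose x i * g ^ i
        + ∑ i ∈ range (k + 1), (i : ℝ) * rchoose x i * g ^ i := by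
    rw [eval_truncBinomial, mul_sum, ← sum_add_distrib]
    exact sum_congr rfl fun i _ => by ring
  rw [hxP, ← hXD, sum_range_succ, ← hD]
  ring

end Identities

section Concavity

variable {x : ℝ} {k : ℕ}

lemma eval_truncBinomial_pos (hx : (k : ℝ) ≤ x) {g : ℝ} (hg : 0 ≤ g) :
    0 < (truncBinomial x k).eval g := by
  rw [eval_truncBinomial, sum_range_succ', pow_zero, mul_one, rchoose_zero]
  refine add_pos_of_nonneg_of_pos (sum_nonneg fun i hi => ?_) one_pos
  have := rchoose_nonneg_of_mem_range hx (mem_range_succ_iff.2 (mem_range.1 hi))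
  positivity

lemma monotoneOn_pow_div_eval_truncBinomial (hx : (k : ℝ) ≤ x) :
    MonotoneOn (fun g => g ^ k / (truncBinomial x k).eval g) (Set.Ici 0) := by
  intro g hg h hh hgh
  rw [div_le_div_iff₀ (eval_truncBinomial_pos hx hg) (eval_truncBinomial_pos hx hh),
    eval_truncBinomial, eval_truncBinomial]
  exact pow_mul_sum_le_pow_mul_sum k (fun _ => rchoose_nonneg_of_mem_range hx) hg hgh

lemma hasDerivAt_log_eval_truncBinomial_exp_sub_one {t : ℝ}
    (hP : (truncBinomial x k).eval (exp t - 1) ≠ 0) :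
    HasDerivAt (fun t => log ((truncBinomial x k).eval (exp t - 1)))
      (x - (x - k) * rchoose x k * ((exp t - 1) ^ k / (truncBinomial x k).eval (exp t - 1))) t := by
  have hP' : HasDerivAt (fun t => (truncBinomial x k).eval (exp t - 1))
      ((derivative (truncBinomial x k)).eval (exp t - 1) * exp t) t :=
    ((truncBinomial x k).hasDerivAt _).comp t ((hasDerivAt_exp t).sub_const 1)
  convert hP'.log hP using 1
  have key := one_add_mul_eval_derivative_truncBinomial x k (exp t - 1)
  rw [add_sub_cancel] at key
  rw [mul_comm _ (exp t), key]
  field_simp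

theorem concaveOn_log_eval_truncBinomial_exp_sub_one (hx : (k : ℝ) ≤ x) :
    ConcaveOn ℝ (Set.Ici 0) (fun t => log ((truncBinomial x k).eval (exp t - 1))) := by
  have hg {t : ℝ} (ht : 0 ≤ t) : 0 ≤ exp t - 1 := by linarith [one_le_exp ht]
  have hderiv {t : ℝ} (ht : 0 ≤ t) :=
    hasDerivAt_log_eval_truncBinomial_exp_sub_one (eval_truncBinomial_pos hx (hg ht)).ne'
  refine AntitoneOn.concaveOn_of_deriv (convex_Ici 0)
    (fun t ht => (hderiv ht).continuousAt.continuousWithinAt) ?_ ?_ <;> rw [interior_Ici]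
  · exact fun t ht => (hderiv ht.le).differentiableAt.differentiableWithinAt
  · intro s hs t ht hst
    rw [(hderiv hs.le).deriv, (hderiv ht.le).deriv]
    have hc : 0 ≤ (x - k) * rchoose x k :=
      mul_nonneg (by linarith) (rchoose_nonneg_of_mem_range hx (self_mem_range_succ k))
    have hmono := monotoneOn_pow_div_eval_truncBinomial hx (hg hs.le) (hg ht.le) (by gcongr)
    exact sub_le_sub_left (mul_le_mul_of_nonneg_left hmono hc) x

theorem eval_one_rpow_logb_le_eval_truncBinomial (hx : (k : ℝ) ≤ x) {γ : ℝ} (hγ0 : 0 ≤ γ)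
    (hγ1 : γ ≤ 1) :
    (truncBinomial x k).eval 1 ^ logb 2 (1 + γ) ≤ (truncBinomial x k).eval γ := by
  set s := logb 2 (1 + γ)
  have hs0 : 0 ≤ s := logb_nonneg one_lt_two (by linarith)
  have hs1 : s ≤ 1 := by
    simpa using logb_le_logb_of_le one_lt_two (by linarith) (by linarith : 1 + γ ≤ 2)
  have hconc := (concaveOn_log_eval_truncBinomial_exp_sub_one hx).2 Set.self_mem_Ici
    (Set.mem_Ici.2 (log_nonneg one_le_two)) (sub_nonneg.2 hs1) hs0 (by ring)
  have ht : (1 - s) • (0 : ℝ) + s • log 2 = log (1 + γ) := by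
    simp [s, logb, div_mul_cancel₀ _ (log_pos one_lt_two).ne']
  rw [ht] at hconc
  rw [rpow_le_iff_le_log (eval_truncBinomial_pos hx zero_le_one) (eval_truncBinomial_pos hx hγ0)]
  norm_num [eval_truncBinomial_zero, exp_log, show (0 : ℝ) < 1 + γ by linarith] at hconc
  exact hconc

end Concavity

theorem stmt_3_general (k : ℕ) (γ x : ℝ) (hγ0 : 0 ≤ γ) (hγ1 : γ ≤ 1)
    (hx : (k : ℝ) ≤ x) :
    ∑ i ∈ Finset.range (k + 1), rchoose x i * γ ^ i ≥
      (1 / 4) * (∑ i ∈ Finset.range (k + 1), rchoose x i) ^ Real.logb 2 (1 + γ) := by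
  have h := eval_one_rpow_logb_le_eval_truncBinomial hx hγ0 hγ1
  have hS := rpow_nonneg (eval_truncBinomial_pos hx zero_le_one).le (logb 2 (1 + γ))
  simp only [eval_truncBinomial, one_pow, mul_one] at h hS
  linarith

/-- For every positive integer `k` and reals `0 ≤ γ ≤ 1`, `x ≥ k`:
`∑_{i=0}^k C(x,i) γ^i ≥ (1/4) (∑_{i=0}^k C(x,i))^{log₂(1+γ)}`. -/
theorem stmt_3 (k : ℕ) (hk : 0 < k) (γ x : ℝ) (hγ0 : 0 ≤ γ) (hγ1 : γ ≤ 1)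
    (hx : (k : ℝ) ≤ x) :
    ∑ i ∈ Finset.range (k + 1), rchoose x i * γ ^ i ≥
      (1 / 4) * (∑ i ∈ Finset.range (k + 1), rchoose x i) ^ Real.logb 2 (1 + γ) :=
  stmt_3_general k γ x hγ0 hγ1 hx
end

section
/- Let H be a hypergeometric random variable with parameters (n, x, y) (i.e., H = |X ∩ Y| where X ⊆ [n] is a uniformly random subset of size x and Y is a fixed subset of size y), and let B be a binomial random variable with parameters (x, y/n). If x ≤ √n, then for every integer 0 ≤ h ≤ x, P[H = h] ≤ 2 P[B = h]. -/
/-!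
Over falling factorials, `P[H = h] = C(x,h) (y)_h (n-y)_{x-h} / (n)_x` and
`P[B = h] = C(x,h) y^h (n-y)^{x-h} / n^x`. The numerators compare termwise since `(a)_k ≤ a^k`.
For the denominators, `n^x ≤ (n)_x + C(x,2) n^{x-1}`, and `2 C(x,2) ≤ x^2 ≤ n` turns this into
`n^x ≤ 2 (n)_x`.
-/

open scoped Nat

namespace Nat

theorem pow_le_descFactorial_add_choose_two_mul (n : ℕ) :
    ∀ k : ℕ, n ^ k ≤ n.descFactorial k + k.choose 2 * n ^ (k - 1)
  | 0 => by simp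
  | k + 1 => by
    have ih := pow_le_descFactorial_add_choose_two_mul n k
    have hshift : k.choose 2 * n ^ (k - 1) * n = k.choose 2 * n ^ k := by
      cases k with
      | zero => simp
      | succ k => simp [pow_succ, mul_assoc]
    have hfalling : n * n.descFactorial k ≤ n.descFactorial (k + 1) + k * n ^ k :=
      calc n * n.descFactorial k ≤ (n - k + k) * n.descFactorial k := by gcongr; omega
        _ = n.descFactorial (k + 1) + k * n.descFactorial k := by
            rw [descFactorial_succ, add_mul]
        _ ≤ n.descFactorial (k + 1) + k * n ^ k := by
            gcongr; exact descFactorial_le_pow n k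
    calc n ^ (k + 1) = n ^ k * n := pow_succ n k
      _ ≤ (n.descFactorial k + k.choose 2 * n ^ (k - 1)) * n := by gcongr
      _ = n * n.descFactorial k + k.choose 2 * n ^ k := by rw [add_mul, hshift, mul_comm]
      _ ≤ n.descFactorial (k + 1) + k * n ^ k + k.choose 2 * n ^ k := by gcongr
      _ = n.descFactorial (k + 1) + (k + 1).choose 2 * n ^ (k + 1 - 1) := by
            rw [choose_succ_succ, choose_one_right, add_tsub_cancel_right]; ring

theorem pow_le_two_mul_descFactorial {n k : ℕ} (hk : k ^ 2 ≤ n) :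
    n ^ k ≤ 2 * n.descFactorial k := by
  have hcorrection : 2 * (k.choose 2 * n ^ (k - 1)) ≤ n ^ k := by
    cases k with
    | zero => simp
    | succ k =>
      have hchoose : 2 * (k + 1).choose 2 ≤ n :=
        calc 2 * (k + 1).choose 2 ≤ (k + 1) * (k + 1 - 1) := by
              rw [choose_two_right]; exact Nat.mul_div_le _ _
          _ ≤ (k + 1) ^ 2 := by rw [sq]; gcongr; omega
          _ ≤ n := hk
      calc 2 * ((k + 1).choose 2 * n ^ (k + 1 - 1)) = 2 * (k + 1).choose 2 * n ^ k := by
            rw [add_tsub_cancel_right, mul_assoc]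
        _ ≤ n * n ^ k := by gcongr
        _ = n ^ (k + 1) := by ring
  have := pow_le_descFactorial_add_choose_two_mul n k
  omega

theorem choose_mul_choose_mul_factorial {x h : ℕ} (y m : ℕ) (hhx : h ≤ x) :
    y.choose h * m.choose (x - h) * x ! =
      x.choose h * (y.descFactorial h * m.descFactorial (x - h)) := by
  rw [← choose_mul_factorial_mul_factorial hhx, descFactorial_eq_factorial_mul_choose,
    descFactorial_eq_factorial_mul_choose]
  ring

end Nat

theorem choose_mul_choose_div_choose_eq {n x h : ℕ} (y m : ℕ) (hxn : x ≤ n) (hhx : h ≤ x) :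
    (y.choose h * m.choose (x - h) / n.choose x : ℝ) =
      x.choose h * (y.descFactorial h * m.descFactorial (x - h)) / n.descFactorial x := by
  have hchoose : (n.choose x : ℝ) ≠ 0 := by exact_mod_cast (Nat.choose_pos hxn).ne'
  have hdesc : (n.descFactorial x : ℝ) ≠ 0 := by exact_mod_cast (Nat.descFactorial_pos.mpr hxn).ne'
  rw [div_eq_div_iff hchoose hdesc, Nat.descFactorial_eq_factorial_mul_choose n x]
  norm_cast
  rw [← mul_assoc, Nat.choose_mul_choose_mul_factorial y m hhx]

theorem div_pow_mul_one_sub_div_pow_eq {n y h x : ℕ} (hn : n ≠ 0) (hyn : y ≤ n) (hhx : h ≤ x) :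
    ((y : ℝ) / n) ^ h * (1 - (y : ℝ) / n) ^ (x - h) =
      y ^ h * ((n - y : ℕ) : ℝ) ^ (x - h) / n ^ x := by
  obtain ⟨k, rfl⟩ := Nat.exists_eq_add_of_le hhx
  have hn' : (n : ℝ) ≠ 0 := by exact_mod_cast hn
  rw [one_sub_div hn', Nat.cast_sub hyn, add_tsub_cancel_left, pow_add, div_pow, div_pow,
    div_mul_div_comm]

/-- Hypergeometric vs binomial: if `x ≤ √n` then for every `0 ≤ h ≤ x`,
`P[H = h] = C(y,h)C(n-y,x-h)/C(n,x) ≤ 2 C(x,h) (y/n)^h (1-y/n)^{x-h} = 2 P[B = h]`. -/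
theorem stmt_6 (n x y h : ℕ) (hn : 0 < n) (hxn : x ≤ n) (hyn : y ≤ n)
    (hsqrt : (x : ℝ) ≤ Real.sqrt n) (hhx : h ≤ x) :
    ((Nat.choose y h : ℝ) * (Nat.choose (n - y) (x - h) : ℝ)) / (Nat.choose n x : ℝ)
      ≤ 2 * (Nat.choose x h : ℝ) * ((y : ℝ) / n) ^ h * (1 - (y : ℝ) / n) ^ (x - h) := by
  have hx2 : x ^ 2 ≤ n := by
    exact_mod_cast (Real.le_sqrt (by positivity) (by positivity)).mp hsqrt
  have hpow : (n : ℝ) ^ x / 2 ≤ n.descFactorial x := by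
    rw [div_le_iff₀' two_pos]
    exact_mod_cast Nat.pow_le_two_mul_descFactorial hx2
  rw [choose_mul_choose_div_choose_eq y (n - y) hxn hhx, mul_assoc (2 * _ : ℝ),
    div_pow_mul_one_sub_div_pow_eq hn.ne' hyn hhx]
  calc (x.choose h : ℝ) * (y.descFactorial h * (n - y).descFactorial (x - h)) / n.descFactorial x
      ≤ x.choose h * (y ^ h * ((n - y : ℕ) : ℝ) ^ (x - h)) / n.descFactorial x := by
        gcongr <;> exact_mod_cast Nat.descFactorial_le_pow _ _
    _ ≤ x.choose h * (y ^ h * ((n - y : ℕ) : ℝ) ^ (x - h)) / (n ^ x / 2) := by gcongr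
    _ = 2 * x.choose h * (y ^ h * ((n - y : ℕ) : ℝ) ^ (x - h) / n ^ x) := by ring
end

section
/- For every real x > 0, one has 2^{x−1} < ∑_{i=0}^{⌊x⌋} C(x, i) ≤ 2^x. -/
open Finset Polynomial

theorem rchoose_eq_ringChoose (x : ℝ) (i : ℕ) : rchoose x i = Ring.choose x i := by
  rw [rchoose, Ring.choose_eq_smul, ← aeval_eq_smeval, aeval_def, eval₂_eq_eval_map,
    descPochhammer_map, descPochhammer_eval_eq_prod_range, smul_eq_mul, div_eq_inv_mul]

theorem ascPochhammer_eval_nonneg {S : Type*} [Semiring S] [PartialOrder S] [IsOrderedRing S]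
    {s : S} (hs : 0 ≤ s) (n : ℕ) : 0 ≤ (ascPochhammer S n).eval s := by
  induction n with
  | zero => simp
  | succ n ih => rw [ascPochhammer_succ_eval]; exact mul_nonneg ih (add_nonneg hs n.cast_nonneg)

theorem Ring.multichoose_nonneg {R : Type*} [CommRing R] [LinearOrder R] [IsStrictOrderedRing R]
    [BinomialRing R] {t : R} (ht : 0 ≤ t) (m : ℕ) : 0 ≤ Ring.multichoose t m := by
  have h := Ring.factorial_nsmul_multichoose_eq_ascPochhammer t m
  rw [ascPochhammer_smeval_eq_eval, nsmul_eq_mul] at h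
  exact nonneg_of_mul_nonneg_right (h ▸ ascPochhammer_eval_nonneg ht m) (by positivity)

theorem Ring.sum_range_choose_add_natCast {R : Type*} [CommRing R] [BinomialRing R] (a : R)
    (n : ℕ) : ∑ i ∈ range (n + 1), Ring.choose (a + n) i
      = ∑ m ∈ range (n + 1), 2 ^ (n - m) * Ring.multichoose a m := by
  induction n with
  | zero => simp
  | succ n ih =>
    set S := ∑ i ∈ range (n + 1), Ring.choose (a + n) i
    have top : Ring.choose (a + n) (n + 1) = Ring.multichoose a (n + 1) := by
      rw [Ring.multichoose_eq]; push_cast; ring_nf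
    have hL : ∑ i ∈ range (n + 2), Ring.choose (a + (n + 1 : ℕ)) i
        = 2 * S + Ring.multichoose a (n + 1) := by
      have shifted : ∑ i ∈ range (n + 1), Ring.choose (a + n) (i + 1) + 1
          = S + Ring.multichoose a (n + 1) := by
        rw [← top, ← sum_range_succ, ← Ring.choose_zero_right (a + n), ← sum_range_succ']
      simp only [sum_range_succ' _ (n + 1), Nat.cast_succ, ← add_assoc, Ring.choose_succ_succ,
        sum_add_distrib, Ring.choose_zero_right]
      rw [add_assoc, shifted]
      ring
    have hR : ∑ m ∈ range (n + 2), (2 : R) ^ (n + 1 - m) * Ring.multichoose a m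
        = 2 * ∑ m ∈ range (n + 1), 2 ^ (n - m) * Ring.multichoose a m
          + Ring.multichoose a (n + 1) := by
      rw [sum_range_succ, Nat.sub_self, pow_zero, one_mul, mul_sum]
      congr 1
      refine sum_congr rfl fun m hm => ?_
      rw [Nat.sub_add_comm (mem_range_succ_iff.mp hm), pow_succ]
      ring
    rw [hL, hR, ih]

theorem sum_range_rchoose_add_natCast (t : ℝ) (n : ℕ) :
    ∑ i ∈ range (n + 1), rchoose (t + n) i
      = 2 ^ n * ∑ m ∈ range (n + 1), Ring.multichoose t m / 2 ^ m := by
  simp only [rchoose_eq_ringChoose, Ring.sum_range_choose_add_natCast, mul_sum]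
  refine sum_congr rfl fun m hm => ?_
  rw [pow_sub₀ _ two_ne_zero (mem_range_succ_iff.mp hm)]
  ring

theorem hasSum_multichoose_div_two_pow (a : ℝ) :
    HasSum (fun m : ℕ ↦ Ring.multichoose a m / 2 ^ m) (2 ^ a) := by
  have h := (Real.one_div_one_sub_rpow_hasFPowerSeriesOnBall_zero a).hasSum
    (y := 2⁻¹) (by norm_num [Metric.mem_eball, enorm_eq_nnnorm])
  simp only [FormalMultilinearSeries.ofScalars_apply_eq, ← Ring.multichoose_eq, smul_eq_mul,
    inv_pow, ← div_eq_mul_inv] at h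
  rwa [show (1 : ℝ) / (1 - (0 + 2⁻¹)) ^ a = 2 ^ a by norm_num [Real.inv_rpow, Real.div_rpow]] at h

theorem sum_multichoose_div_two_pow_le {t : ℝ} (ht : 0 ≤ t) (s : Finset ℕ) :
    ∑ m ∈ s, Ring.multichoose t m / 2 ^ m ≤ 2 ^ t :=
  sum_le_hasSum s (fun m _ => by have := Ring.multichoose_nonneg ht m; positivity)
    (hasSum_multichoose_div_two_pow t)

theorem one_le_sum_range_multichoose_div_two_pow {t : ℝ} (ht : 0 ≤ t) (n : ℕ) :
    1 ≤ ∑ m ∈ range (n + 1), Ring.multichoose t m / 2 ^ m := by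
  rw [sum_range_succ', Ring.multichoose_zero_right, pow_zero, div_one, le_add_iff_nonneg_left]
  exact sum_nonneg fun m _ => by have := Ring.multichoose_nonneg ht (m + 1); positivity

/-- For every real `x > 0`: `2^{x-1} < ∑_{i=0}^{⌊x⌋} C(x,i) ≤ 2^x`. -/
theorem stmt_8 (x : ℝ) (hx : 0 < x) :
    (2 : ℝ) ^ (x - 1) < ∑ i ∈ Finset.range (⌊x⌋₊ + 1), rchoose x i ∧
      ∑ i ∈ Finset.range (⌊x⌋₊ + 1), rchoose x i ≤ (2 : ℝ) ^ x := by
  set n := ⌊x⌋₊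
  set t := x - n
  have ht : 0 ≤ t := sub_nonneg.mpr (Nat.floor_le hx.le)
  have hsum : ∑ i ∈ range (n + 1), rchoose x i
      = 2 ^ n * ∑ m ∈ range (n + 1), Ring.multichoose t m / 2 ^ m := by
    rw [← sum_range_rchoose_add_natCast, sub_add_cancel]
  rw [hsum]
  constructor
  · calc (2 : ℝ) ^ (x - 1) < 2 ^ (n : ℝ) :=
          Real.rpow_lt_rpow_of_exponent_lt one_lt_two (by linarith [Nat.lt_floor_add_one x])
      _ = 2 ^ n * 1 := by rw [Real.rpow_natCast, mul_one]
      _ ≤ _ := by gcongr; exact one_le_sum_range_multichoose_div_two_pow ht n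
  · calc _ ≤ (2 : ℝ) ^ n * 2 ^ t := by gcongr; exact sum_multichoose_div_two_pow_le ht _
      _ = 2 ^ x := by rw [← Real.rpow_natCast, ← Real.rpow_add two_pos, add_sub_cancel]
end

section
/- Let x, y > 0 be reals and k, i, Δ natural numbers with Δ ≤ i ≤ k. If C(y, k) ≤ C(x, k−Δ), then C(y, i)/C(y, k) ≥ i^{−Δ} · C(x, i−Δ)/C(x, k−Δ). -/
open Finset
open scoped Nat

lemma prod_range_sub_pos {z : ℝ} {n : ℕ} (h : (n : ℝ) ≤ z) : 0 < ∏ j ∈ range n, (z - j) := by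
  refine prod_pos fun j hj => ?_
  have : (j : ℝ) + 1 ≤ n := by exact_mod_cast mem_range.mp hj
  linarith

lemma rchoose_pos {z : ℝ} {n : ℕ} (h : (n : ℝ) ≤ z) : 0 < rchoose z n :=
  div_pos (prod_range_sub_pos h) (by positivity)

lemma rchoose_lt_rchoose_left {y x : ℝ} {n : ℕ} (hn : 0 < n) (hny : (n : ℝ) ≤ y)
    (hyx : y < x) : rchoose y n < rchoose x n := by
  refine div_lt_div_of_pos_right ?_ (by positivity)
  refine prod_lt_prod_of_nonempty (fun j hj => ?_) (fun j _ => by linarith)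
    (nonempty_range_iff.mpr hn.ne')
  have : (j : ℝ) + 1 ≤ n := by exact_mod_cast mem_range.mp hj
  linarith

lemma rchoose_div_rchoose {z : ℝ} {i k : ℕ} (hik : i ≤ k) (hiz : (i : ℝ) ≤ z) :
    rchoose z i / rchoose z k = ((k ! : ℝ) / i !) / ∏ j ∈ Ico i k, (z - j) := by
  have hP := (prod_range_sub_pos hiz).ne'
  unfold rchoose
  rw [← prod_range_mul_prod_Ico _ hik]
  field_simp

lemma rchoose_add_one_add_one (x : ℝ) (n : ℕ) :
    rchoose (x + 1) (n + 1) = rchoose x n * (x + 1) / (n + 1) := by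
  unfold rchoose
  rw [prod_range_succ', Nat.factorial_succ]
  push_cast
  simp only [add_sub_add_right_eq_sub, sub_zero]
  field_simp

lemma rchoose_div_rchoose_le_of_le {x y : ℝ} {i k : ℕ} (hik : i ≤ k) (hky : (k : ℝ) ≤ y)
    (hyx : y ≤ x) : rchoose x i / rchoose x k ≤ rchoose y i / rchoose y k := by
  have hiy : (i : ℝ) ≤ y := le_trans (by exact_mod_cast hik) hky
  rw [rchoose_div_rchoose hik hiy, rchoose_div_rchoose hik (hiy.trans hyx)]
  have hQ : ∀ j ∈ Ico i k, 0 < y - j := fun j hj => by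
    have : (j : ℝ) + 1 ≤ k := by exact_mod_cast (mem_Ico.mp hj).2
    linarith
  gcongr
  · exact prod_pos hQ
  · exact fun j hj => (hQ j hj).le

lemma rchoose_div_rchoose_le_of_rchoose_le {x y : ℝ} {i k : ℕ} (hik : i ≤ k)
    (hky : (k : ℝ) ≤ y) (hkx : (k : ℝ) ≤ x) (h : rchoose y k ≤ rchoose x k) :
    rchoose x i / rchoose x k ≤ rchoose y i / rchoose y k := by
  rcases hik.eq_or_lt with rfl | hik
  · rw [div_self (rchoose_pos hkx).ne', div_self (rchoose_pos hky).ne']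
  · refine rchoose_div_rchoose_le_of_le hik.le hky (not_lt.mp fun hxy => ?_)
    exact (rchoose_lt_rchoose_left (by omega) hkx hxy).not_ge h

lemma rchoose_le_rchoose_add_one_add_one {x : ℝ} {n : ℕ} (h : (n : ℝ) ≤ x) :
    rchoose x n ≤ rchoose (x + 1) (n + 1) := by
  rw [rchoose_add_one_add_one, mul_div_assoc]
  exact le_mul_of_one_le_right (rchoose_pos h).le ((one_le_div (by positivity)).mpr (by linarith))

lemma rchoose_div_rchoose_le_add_one_add_one {x : ℝ} {a b : ℕ} (hab : a ≤ b)
    (hbx : (b : ℝ) ≤ x) :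
    rchoose x a / rchoose x b ≤ rchoose (x + 1) (a + 1) / rchoose (x + 1) (b + 1) := by
  have hpa := rchoose_pos (le_trans (by exact_mod_cast hab) hbx)
  have hx : x + 1 ≠ 0 := by linarith [(b.cast_nonneg : (0 : ℝ) ≤ b)]
  have hratio : rchoose (x + 1) (a + 1) / rchoose (x + 1) (b + 1) =
      rchoose x a / rchoose x b * ((b + 1) / (a + 1)) := by
    rw [rchoose_add_one_add_one, rchoose_add_one_add_one]
    field_simp [(rchoose_pos hbx).ne']
  rw [hratio]
  refine le_mul_of_one_le_right (div_pos hpa (rchoose_pos hbx)).le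
    ((one_le_div (by positivity)).mpr ?_)
  exact_mod_cast Nat.succ_le_succ hab

lemma rchoose_le_rchoose_add_add {x : ℝ} {n : ℕ} (h : (n : ℝ) ≤ x) (d : ℕ) :
    rchoose x n ≤ rchoose (x + d) (n + d) := by
  induction d with
  | zero => simp
  | succ d ih =>
    refine ih.trans ?_
    push_cast [← add_assoc]
    exact rchoose_le_rchoose_add_one_add_one (by push_cast; linarith)

lemma rchoose_div_rchoose_le_add_add {x : ℝ} {a b : ℕ} (hab : a ≤ b) (hbx : (b : ℝ) ≤ x)
    (d : ℕ) :
    rchoose x a / rchoose x b ≤ rchoose (x + d) (a + d) / rchoose (x + d) (b + d) := by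
  induction d with
  | zero => simp
  | succ d ih =>
    refine ih.trans ?_
    push_cast [← add_assoc]
    exact rchoose_div_rchoose_le_add_one_add_one (by omega) (by push_cast; linarith)

theorem stmt_9_general (x y : ℝ) (k i Δ : ℕ)
    (hΔi : Δ ≤ i) (hik : i ≤ k) (hky : (k : ℝ) ≤ y) (hkx : ((k - Δ : ℕ) : ℝ) ≤ x)
    (h : rchoose y k ≤ rchoose x (k - Δ)) :
    rchoose y i / rchoose y k ≥
      (rchoose x (i - Δ) / rchoose x (k - Δ)) / (i : ℝ) ^ Δ := by
  obtain ⟨a, rfl⟩ : ∃ a, i = a + Δ := ⟨i - Δ, by omega⟩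
  obtain ⟨b, rfl⟩ : ∃ b, k = b + Δ := ⟨k - Δ, by omega⟩
  simp only [Nat.add_sub_cancel] at hkx h ⊢
  have hab : a ≤ b := by omega
  have hpow : 1 ≤ ((a + Δ : ℕ) : ℝ) ^ Δ := by
    rcases Nat.eq_zero_or_pos (a + Δ) with hi0 | hi0
    · simp [show Δ = 0 by omega]
    · exact one_le_pow₀ (by exact_mod_cast hi0)
  have hkxΔ : ((b + Δ : ℕ) : ℝ) ≤ x + Δ := by push_cast; linarith
  calc rchoose x a / rchoose x b / ((a + Δ : ℕ) : ℝ) ^ Δ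
      ≤ rchoose x a / rchoose x b :=
        div_le_self (div_nonneg (rchoose_pos (le_trans (by exact_mod_cast hab) hkx)).le
          (rchoose_pos hkx).le) hpow
    _ ≤ rchoose (x + Δ) (a + Δ) / rchoose (x + Δ) (b + Δ) :=
        rchoose_div_rchoose_le_add_add hab hkx Δ
    _ ≤ rchoose y (a + Δ) / rchoose y (b + Δ) :=
        rchoose_div_rchoose_le_of_rchoose_le (by omega) hky hkxΔ
          (h.trans (rchoose_le_rchoose_add_add hkx Δ))

/-- If `C(y,k) ≤ C(x,k-Δ)` then `C(y,i)/C(y,k) ≥ i^{-Δ} C(x,i-Δ)/C(x,k-Δ)`,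
for `Δ ≤ i ≤ k`, assuming `k ≤ y` and `k - Δ ≤ x` so that the coefficients
involved are positive. -/
theorem stmt_9 (x y : ℝ) (k i Δ : ℕ) (hx : 0 < x) (hy : 0 < y)
    (hΔi : Δ ≤ i) (hik : i ≤ k) (hky : (k : ℝ) ≤ y) (hkx : ((k - Δ : ℕ) : ℝ) ≤ x)
    (h : rchoose y k ≤ rchoose x (k - Δ)) :
    rchoose y i / rchoose y k ≥
      (rchoose x (i - Δ) / rchoose x (k - Δ)) / (i : ℝ) ^ Δ :=
  stmt_9_general x y k i Δ hΔi hik hky hkx h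
end

section
/- Let F be a family of m binary vectors of length n (equivalently, a hypergraph on [n] with m edges) with m > ∑_{i=0}^{k−1} C(n, i). Then there exists a set I ⊆ [n] with |I| = k such that the trace F_I = {e ∩ I : e ∈ F} consists of all 2^k subsets of I. -/
/-!
By Pajor's form of the Sauer–Shelah lemma, a family has at most as many members as it shatters
sets, and the shattered sets form a lower set of sets of size at most the VC dimension. So more
than `∑_{i<k} C(n,i)` members force VC dimension at least `k`, and any `k`-subset of a largest
shattered set is shattered.
-/

namespace Finset

variable {α : Type*} [DecidableEq α] {𝒜 : Finset (Finset α)} {k : ℕ}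

lemma exists_shatters_card_eq_of_le_vcDim (h𝒜 : 𝒜.Nonempty) (hk : k ≤ 𝒜.vcDim) :
    ∃ s, #s = k ∧ 𝒜.Shatters s := by
  obtain ⟨s, hs, hcard⟩ :=
    exists_mem_eq_sup 𝒜.shatterer ⟨∅, mem_shatterer.2 (shatters_empty.2 h𝒜)⟩ card
  obtain ⟨t, hts, htk⟩ := exists_subset_card_eq (hcard ▸ hk : k ≤ #s)
  exact ⟨t, htk, (mem_shatterer.1 hs).mono_right hts⟩

lemma le_vcDim_of_sum_choose_lt [Fintype α]
    (h : ∑ i ∈ range k, (Fintype.card α).choose i < #𝒜) : k ≤ 𝒜.vcDim := by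
  by_contra! hk
  have hsum : ∑ i ∈ Iic 𝒜.vcDim, (Fintype.card α).choose i
      ≤ ∑ i ∈ range k, (Fintype.card α).choose i :=
    sum_le_sum_of_subset fun i hi ↦ mem_range.2 ((mem_Iic.1 hi).trans_lt hk)
  have := (card_le_card_shatterer 𝒜).trans card_shatterer_le_sum_vcDim
  omega

end Finset

/-- Sauer–Perles–Shelah: if a family `F` of subsets of `[n]` has more than
`∑_{i=0}^{k-1} C(n,i)` members, then some `k`-set `I` is shattered: every
subset of `I` arises as `e ∩ I` for some `e ∈ F`. -/
theorem stmt_11 (n k : ℕ) (F : Finset (Finset (Fin n)))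
    (h : ∑ i ∈ Finset.range k, Nat.choose n i < F.card) :
    ∃ I : Finset (Fin n), I.card = k ∧ ∀ J ⊆ I, ∃ e ∈ F, e ∩ I = J := by
  have hF : F.Nonempty := Finset.card_pos.1 (by omega)
  have hk : k ≤ F.vcDim := Finset.le_vcDim_of_sum_choose_lt (by rwa [Fintype.card_fin])
  obtain ⟨I, hIk, hI⟩ := Finset.exists_shatters_card_eq_of_le_vcDim hF hk
  refine ⟨I, hIk, fun J hJ ↦ ?_⟩
  obtain ⟨e, he, hIe⟩ := hI hJ
  exact ⟨e, he, by rwa [Finset.inter_comm]⟩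
end
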